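/- arXiv:1508.07256 — 2 statements merged into one kernel-verified Lean document; each statement's English description precedes it below -/
import Mathlib

section
/- Let C be a class of finite graphs. The following are equivalent: (1) C is somewhere dense; (2) every finite graph belongs to C▽d for some d ∈ ℕ; (3) every finite graph belongs to C*▽d for some d ∈ ℕ; (4) the countably infinite clique K_ω belongs to C*▽ω; (5) the clique K_𝔠 on continuum many vertices belongs to C*▽ω. -/
namespace NWD

open SimpleGraph Filter

/-! ### Shallow minors -/

/-- A `d`-shallow minor model of `H` in `G`: a family of pairwise disjoint branch sets,
each connected of radius at most `d` (witnessed by a center joined to every vertex of the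
branch set by a walk of length at most `d` inside the branch set), such that every edge of `H`
is realized by an edge of `G` between the corresponding branch sets. -/
def IsShallowMinorModel {V W : Type} (G : SimpleGraph V) (H : SimpleGraph W) (d : ℕ)
    (α : W → G.Subgraph) : Prop :=
  (∀ w : W, ∃ c : (α w).verts, ∀ x : (α w).verts, ∃ p : (α w).coe.Walk c x, p.length ≤ d) ∧
  (∀ w w' : W, w ≠ w' → Disjoint (α w).verts (α w').verts) ∧
  (∀ w w' : W, H.Adj w w' → ∃ x ∈ (α w).verts, ∃ y ∈ (α w').verts, G.Adj x y)

/-- `H` is a shallow minor of `G` at depth `d`. -/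
def IsShallowMinor {V W : Type} (G : SimpleGraph V) (H : SimpleGraph W) (d : ℕ) : Prop :=
  ∃ α : W → G.Subgraph, IsShallowMinorModel G H d α

/-! ### Topological shallow minors -/

/-- A `d`-shallow topological minor model of `H` in `G`: an injective map `f` on vertices
together with, for every edge `uv` of `H`, a path of length at most `2d+1` in `G` from `f u`
to `f v`; the paths are pairwise vertex-disjoint apart from possibly sharing endpoints. -/
def IsTopMinorModel {V W : Type} (G : SimpleGraph V) (H : SimpleGraph W) (d : ℕ)
    (f : W → V) (P : ∀ ⦃u v : W⦄, H.Adj u v → G.Walk (f u) (f v)) : Prop :=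
  Function.Injective f ∧
  (∀ ⦃u v : W⦄ (h : H.Adj u v), (P h).IsPath) ∧
  (∀ ⦃u v : W⦄ (h : H.Adj u v), (P h).length ≤ 2 * d + 1) ∧
  (∀ ⦃u v : W⦄ (h : H.Adj u v), P h.symm = (P h).reverse) ∧
  (∀ ⦃u v u' v' : W⦄ (h : H.Adj u v) (h' : H.Adj u' v'), s(u, v) ≠ s(u', v') →
    ∀ x : V, x ∈ (P h).support → x ∈ (P h').support →
      (x = f u ∨ x = f v) ∧ (x = f u' ∨ x = f v'))

/-- `H` is a topological shallow minor of `G` at depth `d`. -/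
def IsTopShallowMinor {V W : Type} (G : SimpleGraph V) (H : SimpleGraph W) (d : ℕ) : Prop :=
  ∃ (f : W → V) (P : ∀ ⦃u v : W⦄, H.Adj u v → G.Walk (f u) (f v)),
    IsTopMinorModel G H d f P

/-! ### Ultraproducts of graphs -/

/-- The setoid identifying sequences agreeing on a set of the ultrafilter. -/
def prodSetoid (U : Ultrafilter ℕ) (Vs : ℕ → Type) : Setoid (∀ n, Vs n) where
  r g h := ∀ᶠ n in (U : Filter ℕ), g n = h n
  iseqv := by
    constructor
    · intro g; exact Eventually.of_forall fun n => rfl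
    · intro g h hg; exact hg.mono fun n hn => hn.symm
    · intro g h k h1 h2; filter_upwards [h1, h2] with n e1 e2; rw [e1, e2]

/-- The vertex set of the ultraproduct. -/
def UVertex (U : Ultrafilter ℕ) (Vs : ℕ → Type) : Type := Quotient (prodSetoid U Vs)

/-- The ultraproduct of a sequence of graphs along the ultrafilter `U`. -/
def UGraph (U : Ultrafilter ℕ) {Vs : ℕ → Type} (Gs : ∀ n, SimpleGraph (Vs n)) :
    SimpleGraph (UVertex U Vs) where
  Adj x y := Quotient.liftOn₂ x y
    (fun g h => ∀ᶠ n in (U : Filter ℕ), (Gs n).Adj (g n) (h n))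
    (by
      intro a b a' b' ha hb
      apply propext
      constructor
      · intro hadj; filter_upwards [hadj, ha, hb] with n h1 h2 h3; rw [← h2, ← h3]; exact h1
      · intro hadj; filter_upwards [hadj, ha, hb] with n h1 h2 h3; rw [h2, h3]; exact h1)
  symm := by
    constructor
    intro x y
    refine Quotient.inductionOn₂ x y ?_
    intro g h hadj
    exact hadj.mono fun n hn => hn.symm
  loopless := by
    constructor
    intro x
    refine Quotient.inductionOn x ?_
    intro g hadj
    obtain ⟨n, hn⟩ := hadj.exists
    exact (Gs n).loopless.irrefl _ hn

/-! ### Graph classes and class limits -/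

/-- A class of graphs: a predicate on graphs over arbitrary vertex types. -/
def GraphClass : Type 1 := ∀ V : Type, SimpleGraph V → Prop

/-- `C` is a class of finite graphs. -/
def FiniteClass (C : GraphClass) : Prop :=
  ∀ (V : Type) (G : SimpleGraph V), C V G → Finite V

/-- `H` is (isomorphic to) a subgraph of `G`. -/
def IsSubgraphOf {W V : Type} (H : SimpleGraph W) (G : SimpleGraph V) : Prop :=
  ∃ f : W → V, Function.Injective f ∧ ∀ ⦃u v : W⦄, H.Adj u v → G.Adj (f u) (f v)

/-- Membership in the class limit `C*`: subgraphs of ultraproducts of sequences from `C`. -/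
def InLimit (U : Ultrafilter ℕ) (C : GraphClass) {W : Type} (H : SimpleGraph W) : Prop :=
  ∃ (Vs : ℕ → Type) (Gs : ∀ n, SimpleGraph (Vs n)),
    (∀ n, C (Vs n) (Gs n)) ∧ IsSubgraphOf H (UGraph U Gs)

/-- `H ∈ C ▽ d`. -/
def InClassMinor (C : GraphClass) (d : ℕ) {W : Type} (H : SimpleGraph W) : Prop :=
  ∃ (V : Type) (G : SimpleGraph V), C V G ∧ IsShallowMinor G H d

/-- `H ∈ C ∇̃ d`. -/
def InClassTopMinor (C : GraphClass) (d : ℕ) {W : Type} (H : SimpleGraph W) : Prop :=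
  ∃ (V : Type) (G : SimpleGraph V), C V G ∧ IsTopShallowMinor G H d

/-- `H ∈ C* ▽ d`. -/
def InLimitMinor (U : Ultrafilter ℕ) (C : GraphClass) (d : ℕ) {W : Type}
    (H : SimpleGraph W) : Prop :=
  ∃ (V : Type) (G : SimpleGraph V), InLimit U C G ∧ IsShallowMinor G H d

/-- `H ∈ C* ∇̃ d`. -/
def InLimitTopMinor (U : Ultrafilter ℕ) (C : GraphClass) (d : ℕ) {W : Type}
    (H : SimpleGraph W) : Prop :=
  ∃ (V : Type) (G : SimpleGraph V), InLimit U C G ∧ IsTopShallowMinor G H d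

/-- `C` is somewhere dense: all finite graphs are shallow minors at some fixed depth. -/
def SomewhereDense (C : GraphClass) : Prop :=
  ∃ d : ℕ, ∀ (W : Type) (H : SimpleGraph W), Finite W → InClassMinor C d H

/-- `C` is topologically somewhere dense. -/
def TopSomewhereDense (C : GraphClass) : Prop :=
  ∃ d : ℕ, ∀ (W : Type) (H : SimpleGraph W), Finite W → InClassTopMinor C d H

/-- The countably infinite clique `K_ω`. -/
def Komega : SimpleGraph ℕ := ⊤

/-- The clique on continuum many vertices `K_𝔠`. -/
def Kcontinuum : SimpleGraph (Set ℕ) := ⊤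

/-- `C` is hereditary: closed under induced subgraphs. -/
def Hereditary (C : GraphClass) : Prop :=
  ∀ (V : Type) (G : SimpleGraph V), C V G →
    ∀ (W : Type) (f : W → V), Function.Injective f → C W (G.comap f)

/-! ### Scattered sets and quasi-wideness -/

/-- `X` is a `d`-scattered set of `G - S`: it avoids `S`, and any two distinct vertices of `X`
are at distance greater than `2d` in `G - S` (every connecting walk avoiding `S` is longer
than `2d`). -/
def ScatteredIn {V : Type} (G : SimpleGraph V) (d : ℕ) (S X : Set V) : Prop :=
  Disjoint X S ∧ ∀ u ∈ X, ∀ v ∈ X, u ≠ v →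
    ∀ p : G.Walk u v, (∀ x ∈ p.support, x ∉ S) → 2 * d < p.length

/-- `C` is quasi-wide with margin `s`. -/
def QuasiWide (C : GraphClass) (s : ℕ → ℕ) : Prop :=
  ∀ d m : ℕ, ∃ N : ℕ, ∀ (V : Type) (G : SimpleGraph V), C V G → N ≤ Nat.card V →
    ∃ S X : Set V, S.Finite ∧ S.ncard ≤ s d ∧ X.Finite ∧ X.ncard = m ∧ ScatteredIn G d S X

/-- `C` is uniformly quasi-wide with margin `s`. -/
def UniformlyQuasiWide (C : GraphClass) (s : ℕ → ℕ) : Prop :=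
  ∀ d m : ℕ, ∃ N : ℕ, ∀ (V : Type) (G : SimpleGraph V), C V G →
    ∀ W : Set V, N ≤ W.ncard →
      ∃ S X : Set V, S.Finite ∧ S.ncard ≤ s d ∧ X ⊆ W ∧ X.Finite ∧ X.ncard = m ∧
        ScatteredIn G d S X

/-- `C` is limit quasi-wide. -/
def LimitQW (U : Ultrafilter ℕ) (C : GraphClass) : Prop :=
  ∀ (d : ℕ) (V : Type) (G : SimpleGraph V), InLimit U C G → Infinite V →
    ∃ S X : Set V, S.Finite ∧ X.Infinite ∧ ScatteredIn G d S X

/-- `C` is uniformly limit quasi-wide. -/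
def UniformLimitQW (U : Ultrafilter ℕ) (C : GraphClass) : Prop :=
  ∀ (d : ℕ) (V : Type) (G : SimpleGraph V), InLimit U C G →
    ∀ W : Set V, W.Infinite →
      ∃ S X : Set V, S.Finite ∧ X ⊆ W ∧ X.Infinite ∧ ScatteredIn G d S X

/-- `C` is strongly limit quasi-wide with margin `s`. -/
def StrongLimitQW (U : Ultrafilter ℕ) (C : GraphClass) (s : ℕ → ℕ) : Prop :=
  ∀ (d : ℕ) (V : Type) (G : SimpleGraph V), InLimit U C G → Infinite V →
    ∃ S X : Set V, S.Finite ∧ S.ncard ≤ s d ∧ X.Infinite ∧ ScatteredIn G d S X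

/-- `C` is strongly uniformly limit quasi-wide with margin `s`. -/
def StrongUniformLimitQW (U : Ultrafilter ℕ) (C : GraphClass) (s : ℕ → ℕ) : Prop :=
  ∀ (d : ℕ) (V : Type) (G : SimpleGraph V), InLimit U C G →
    ∀ W : Set V, W.Infinite →
      ∃ S X : Set V, S.Finite ∧ S.ncard ≤ s d ∧ X ⊆ W ∧ X.Infinite ∧ ScatteredIn G d S X

/-! ### The splitter game -/

/-- One round of the splitter game: from arena `A`, connector picks `v`, splitter picks `W`;
the new arena consists of the vertices of `A` outside `W` at distance at most `d` from `v`
in the subgraph induced by `A`. -/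
def arenaStep {V : Type} (G : SimpleGraph V) (d : ℕ) (A : Set V) (v : V) (W : Set V) : Set V :=
  {x | x ∈ A ∧ x ∉ W ∧ ∃ p : G.Walk v x, p.length ≤ d ∧ ∀ y ∈ p.support, y ∈ A}

/-- The arena after a (chronological) history of moves. -/
def arenaAfter {V : Type} (G : SimpleGraph V) (d : ℕ) (hist : List (V × Set V)) : Set V :=
  hist.foldl (fun A mv => arenaStep G d A mv.1 mv.2) Set.univ

/-- A strategy for splitter: given the history and connector's new move, produce a set. -/
def SplitterStrategy (V : Type) : Type := List (V × Set V) → V → Set V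

/-- The history of the play where connector plays `c` and splitter follows `σ`. -/
def splitterHist {V : Type} (σ : SplitterStrategy V) (c : ℕ → V) : ℕ → List (V × Set V)
  | 0 => []
  | n + 1 => splitterHist σ c n ++ [(c n, σ (splitterHist σ c n) (c n))]

/-- Connector's first `n` moves are valid (inside the successive arenas). -/
def ConsistentPlay {V : Type} (G : SimpleGraph V) (d : ℕ) (σ : SplitterStrategy V)
    (c : ℕ → V) (n : ℕ) : Prop :=
  ∀ k < n, c k ∈ arenaAfter G d (splitterHist σ c k)

/-- `σ` is a winning strategy for splitter in the limit `d`-splitter game on `G`: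
its moves are valid (finite subsets of the arena) along any consistent play, and no
infinite sequence of valid connector moves exists. -/
def SplitterWinsLimit {V : Type} (G : SimpleGraph V) (d : ℕ) (σ : SplitterStrategy V) : Prop :=
  (∀ (c : ℕ → V) (n : ℕ), ConsistentPlay G d σ c (n + 1) →
      (σ (splitterHist σ c n) (c n)).Finite ∧
      σ (splitterHist σ c n) (c n) ⊆ arenaAfter G d (splitterHist σ c n)) ∧
  (∀ c : ℕ → V, ∃ n : ℕ, c n ∉ arenaAfter G d (splitterHist σ c n))

/-- `σ` is a winning strategy for splitter in the `(ℓ, m, d)`-splitter game on `G`. -/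
def SplitterWinsGame {V : Type} (G : SimpleGraph V) (l m d : ℕ) (σ : SplitterStrategy V) :
    Prop :=
  (∀ (c : ℕ → V) (n : ℕ), ConsistentPlay G d σ c (n + 1) →
      (σ (splitterHist σ c n) (c n)).Finite ∧
      (σ (splitterHist σ c n) (c n)).ncard ≤ m ∧
      σ (splitterHist σ c n) (c n) ⊆ arenaAfter G d (splitterHist σ c n)) ∧
  (∀ c : ℕ → V, ∃ n ≤ l, c n ∉ arenaAfter G d (splitterHist σ c n))

/-- A strategy for connector: given the history, produce a vertex. -/
def ConnectorStrategy (V : Type) : Type := List (V × Set V) → V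

/-- The history of the play where connector follows `τ` and splitter plays `w`. -/
def connectorHist {V : Type} (τ : ConnectorStrategy V) (w : ℕ → Set V) :
    ℕ → List (V × Set V)
  | 0 => []
  | n + 1 => connectorHist τ w n ++ [(τ (connectorHist τ w n), w n)]

/-- `τ` is a winning strategy for connector in the limit `d`-splitter game on `G`:
as long as splitter's moves are valid, connector's moves stay in the arena forever. -/
def ConnectorWinsLimit {V : Type} (G : SimpleGraph V) (d : ℕ) (τ : ConnectorStrategy V) :
    Prop :=
  ∀ (w : ℕ → Set V) (n : ℕ),
    (∀ k < n, (w k).Finite ∧ w k ⊆ arenaAfter G d (connectorHist τ w k)) →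
    τ (connectorHist τ w n) ∈ arenaAfter G d (connectorHist τ w n)

/-- `τ` is a winning strategy for connector in the `(ℓ, m, d)`-splitter game on `G`:
the arena stays nonempty for `ℓ` rounds, i.e. connector has valid moves at rounds `0,…,ℓ`. -/
def ConnectorWinsGame {V : Type} (G : SimpleGraph V) (l m d : ℕ) (τ : ConnectorStrategy V) :
    Prop :=
  ∀ (w : ℕ → Set V) (n : ℕ), n ≤ l →
    (∀ k < n, (w k).Finite ∧ (w k).ncard ≤ m ∧
      w k ⊆ arenaAfter G d (connectorHist τ w k)) →
    τ (connectorHist τ w n) ∈ arenaAfter G d (connectorHist τ w n)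

/-- `C` is winning for splitter. -/
def WinningForSplitter (C : GraphClass) : Prop :=
  ∀ d : ℕ, ∃ l m : ℕ, ∀ (V : Type) (G : SimpleGraph V), C V G →
    ∃ σ : SplitterStrategy V, SplitterWinsGame G l m d σ

/-- `C` is limit winning for splitter. -/
def LimitWinningForSplitter (U : Ultrafilter ℕ) (C : GraphClass) : Prop :=
  ∀ (d : ℕ) (V : Type) (G : SimpleGraph V), InLimit U C G →
    ∃ σ : SplitterStrategy V, SplitterWinsLimit G d σ

/-! ### First-order satisfaction in graphs -/

/-- `G` satisfies the first-order sentence `φ` in the language of graphs. -/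
def GSat {V : Type} (G : SimpleGraph V) (φ : FirstOrder.Language.graph.Sentence) : Prop :=
  @FirstOrder.Language.Sentence.Realize FirstOrder.Language.graph V G.structure φ


/-!
For (3) → (2): a model of a finite graph needs only finitely many vertices (the centres, the
endpoints of the connecting edges and walks of length at most `d` to them), and by Łoś a finite
configuration of vertices and edges of an ultraproduct already occurs in `U`-almost every factor.
For (2) → (5): coordinatewise branch sets turn models of `Hₙ` in `Gₙ` into a model of `∏_U Hₙ`
in `∏_U Gₙ`, a walk of length `ℓ ≤ d` being assembled from walks of length `ℓ` in almost every
factor, with `ℓ` fixed by the ultrafilter; and since `U` is non-principal, `A ↦ [n ↦ A ∩ [0, n)]`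
embeds `K_𝔠` into the ultraproduct of the cliques on `Set (Fin n)`. The remaining implications
are monotonicity of shallow minors in the pattern.
-/

lemma exists_walk_of_chain {V : Type} {G : SimpleGraph V} (f : ℕ → V) :
    ∀ ℓ : ℕ, (∀ i < ℓ, G.Adj (f i) (f (i + 1))) →
      ∃ p : G.Walk (f 0) (f ℓ), p.length = ℓ ∧ ∀ y ∈ p.support, ∃ i ≤ ℓ, f i = y
  | 0, _ => ⟨.nil, rfl, by simp⟩
  | ℓ + 1, hadj => by
    obtain ⟨p, hlen, hsupp⟩ := exists_walk_of_chain f ℓ fun i hi => hadj i (by omega)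
    refine ⟨p.concat (hadj ℓ ℓ.lt_succ_self), by simp [hlen], fun y hy => ?_⟩
    simp only [Walk.support_concat, List.mem_append, List.mem_singleton] at hy
    rcases hy with hy | rfl
    · obtain ⟨i, hi, rfl⟩ := hsupp y hy
      exact ⟨i, by omega, rfl⟩
    · exact ⟨ℓ + 1, le_rfl, rfl⟩

def InducedRadiusLE {V : Type} (G : SimpleGraph V) (S : Set V) (d : ℕ) : Prop :=
  ∃ c ∈ S, ∀ x ∈ S, ∃ p : G.Walk c x, p.length ≤ d ∧ ∀ y ∈ p.support, y ∈ S

namespace InducedRadiusLE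

variable {V V' : Type} {G : SimpleGraph V} {S : Set V} {d : ℕ}

lemma image {G' : SimpleGraph V'} (f : G →g G') (h : InducedRadiusLE G S d) :
    InducedRadiusLE G' (f '' S) d := by
  obtain ⟨c, hc, hwalk⟩ := h
  refine ⟨f c, Set.mem_image_of_mem f hc, ?_⟩
  rintro _ ⟨x, hx, rfl⟩
  obtain ⟨p, hlen, hsupp⟩ := hwalk x hx
  refine ⟨p.map f, by rwa [Walk.length_map], fun y hy => ?_⟩
  rw [Walk.support_map, List.mem_map] at hy
  obtain ⟨z, hz, rfl⟩ := hy
  exact Set.mem_image_of_mem f (hsupp z hz)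

lemma induce {s : Set V} (hS : S ⊆ s) (h : InducedRadiusLE G S d) :
    InducedRadiusLE (G.induce s) (Subtype.val ⁻¹' S) d := by
  obtain ⟨c, hc, hwalk⟩ := h
  refine ⟨⟨c, hS hc⟩, hc, fun x hx => ?_⟩
  obtain ⟨p, hlen, hsupp⟩ := hwalk x hx
  have hmap := p.map_induce (s := s) fun y hy => hS (hsupp y hy)
  refine ⟨p.induce s fun y hy => hS (hsupp y hy), ?_, fun y hy => hsupp y (by simpa using hy)⟩
  rwa [← Walk.length_map, hmap]

lemma exists_finite_subset (h : InducedRadiusLE G S d) {X : Set V} (hX : X.Finite)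
    (hXS : X ⊆ S) : ∃ T ⊆ S, X ⊆ T ∧ T.Finite ∧ InducedRadiusLE G T d := by
  classical
  obtain ⟨c, hc, hwalk⟩ := h
  choose p hlen hsupp using hwalk
  have := hX.to_subtype
  set T := insert c (⋃ x : X, ((p x (hXS x.2)).support.toFinset : Set V))
  have hsuppT : ∀ (x : X) y, y ∈ (p x (hXS x.2)).support → y ∈ T := fun x y hy =>
    Set.mem_insert_of_mem c (Set.mem_iUnion.2 ⟨x, List.mem_toFinset.2 hy⟩)
  refine ⟨T, ?_, fun x hx => hsuppT ⟨x, hx⟩ x (Walk.end_mem_support _),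
    (Set.finite_iUnion fun x => Finset.finite_toSet _).insert c, c, Set.mem_insert c _, ?_⟩
  · refine Set.insert_subset hc (Set.iUnion_subset fun x y hy => ?_)
    exact hsupp x _ y (List.mem_toFinset.1 hy)
  · rintro y (rfl | hy)
    · exact ⟨.nil, Nat.zero_le d, by simp [T]⟩
    obtain ⟨x, hy⟩ := Set.mem_iUnion.1 hy
    have hy := List.mem_toFinset.1 hy
    refine ⟨(p x _).takeUntil y hy, ((p x _).length_takeUntil_le_length hy).trans (hlen x _),
      fun z hz => hsuppT x z ((p x _).support_takeUntil_subset_support hy hz)⟩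

end InducedRadiusLE

def IsBranchSetFamily {V W : Type} (G : SimpleGraph V) (H : SimpleGraph W) (d : ℕ)
    (S : W → Set V) : Prop :=
  (∀ w, InducedRadiusLE G (S w) d) ∧ Pairwise (fun w w' => Disjoint (S w) (S w')) ∧
    ∀ w w', H.Adj w w' → ∃ x ∈ S w, ∃ y ∈ S w', G.Adj x y

section ShallowMinor

variable {V V' W W' : Type} {G : SimpleGraph V} {H : SimpleGraph W} {d : ℕ}

lemma isShallowMinor_iff_exists_isBranchSetFamily :
    IsShallowMinor G H d ↔ ∃ S, IsBranchSetFamily G H d S := by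
  constructor
  · rintro ⟨α, hrad, hdisj, hedge⟩
    refine ⟨fun w => (α w).verts, fun w => ?_, hdisj, hedge⟩
    obtain ⟨c, hc⟩ := hrad w
    have hcoe : InducedRadiusLE (α w).coe Set.univ d :=
      ⟨c, trivial, fun x _ => (hc x).imp fun _ hp => ⟨hp, fun _ _ => trivial⟩⟩
    simpa using hcoe.image (α w).hom
  · rintro ⟨S, hrad, hdisj, hedge⟩
    refine ⟨fun w => (⊤ : G.Subgraph).induce (S w), fun w => ?_, hdisj, hedge⟩
    obtain ⟨c, hc, hwalk⟩ := hrad w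
    let toCoe : G.induce (S w) →g ((⊤ : G.Subgraph).induce (S w)).coe :=
      ⟨id, fun {a b} h => ⟨a.2, b.2, h⟩⟩
    refine ⟨⟨c, hc⟩, fun ⟨x, hx⟩ => ?_⟩
    obtain ⟨p, hlen, hsupp⟩ := hwalk x hx
    refine ⟨(p.induce (S w) hsupp).map toCoe, ?_⟩
    rwa [Walk.length_map, ← Walk.length_map (Embedding.induce _).toHom, Walk.map_induce]

lemma IsShallowMinor.mono {G' : SimpleGraph V'} (hG : IsSubgraphOf G G')
    (h : IsShallowMinor G H d) : IsShallowMinor G' H d := by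
  obtain ⟨f, hf, hadj⟩ := hG
  obtain ⟨S, hrad, hdisj, hedge⟩ := isShallowMinor_iff_exists_isBranchSetFamily.1 h
  refine isShallowMinor_iff_exists_isBranchSetFamily.2 ⟨fun w => f '' S w,
    fun w => (hrad w).image ⟨f, fun h => hadj h⟩,
    fun w w' hne => (Set.disjoint_image_iff hf).2 (hdisj hne), fun w w' h => ?_⟩
  obtain ⟨x, hx, y, hy, hxy⟩ := hedge w w' h
  exact ⟨f x, Set.mem_image_of_mem f hx, f y, Set.mem_image_of_mem f hy, hadj hxy⟩

lemma IsShallowMinor.of_isSubgraphOf {H' : SimpleGraph W'} (hH : IsSubgraphOf H' H)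
    (h : IsShallowMinor G H d) : IsShallowMinor G H' d := by
  obtain ⟨f, hf, hadj⟩ := hH
  obtain ⟨α, hrad, hdisj, hedge⟩ := h
  exact ⟨α ∘ f, fun w => hrad (f w), fun w w' hne => hdisj _ _ (hf.ne hne),
    fun w w' h => hedge _ _ (hadj h)⟩

lemma IsShallowMinor.exists_finite_induce [Finite W] (h : IsShallowMinor G H d) :
    ∃ s : Set V, s.Finite ∧ IsShallowMinor (G.induce s) H d := by
  obtain ⟨S, hrad, hdisj, hedge⟩ := isShallowMinor_iff_exists_isBranchSetFamily.1 h
  choose x hx y hy hxy using hedge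
  set E : Set V := ⋃ (w) (w') (h : H.Adj w w'), {x w w' h, y w w' h}
  have hxE : ∀ w w' h, x w w' h ∈ E := fun w w' h =>
    Set.mem_iUnion₂.2 ⟨w, w', Set.mem_iUnion.2 ⟨h, Set.mem_insert _ _⟩⟩
  have hyE : ∀ w w' h, y w w' h ∈ E := fun w w' h =>
    Set.mem_iUnion₂.2 ⟨w, w', Set.mem_iUnion.2 ⟨h, Set.mem_insert_of_mem _ rfl⟩⟩
  choose T hTS hET hT hTrad using fun w =>
    (hrad w).exists_finite_subset ((Set.toFinite E).inter_of_right (S w)) Set.inter_subset_left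
  refine ⟨⋃ w, T w, Set.finite_iUnion hT, isShallowMinor_iff_exists_isBranchSetFamily.2
    ⟨fun w => Subtype.val ⁻¹' T w, fun w => (hTrad w).induce (Set.subset_iUnion T w),
      fun w w' hne => ((hdisj hne).mono (hTS w) (hTS w')).preimage Subtype.val,
      fun w w' h => ?_⟩⟩
  have hxT : x w w' h ∈ T w := hET w ⟨hx w w' h, hxE w w' h⟩
  have hyT : y w w' h ∈ T w' := hET w' ⟨hy w w' h, hyE w w' h⟩
  exact ⟨⟨_, Set.mem_iUnion_of_mem w hxT⟩, hxT, ⟨_, Set.mem_iUnion_of_mem w' hyT⟩, hyT,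
    hxy w w' h⟩

end ShallowMinor

lemma induce_isSubgraphOf {V : Type} (G : SimpleGraph V) (s : Set V) :
    IsSubgraphOf (G.induce s) G :=
  ⟨Subtype.val, Subtype.val_injective, fun _ _ h => h⟩

lemma isSubgraphOf_top_of_injective {V W : Type} {H : SimpleGraph W} {f : W → V}
    (hf : Function.Injective f) : IsSubgraphOf H (⊤ : SimpleGraph V) :=
  ⟨f, hf, fun _ _ h => hf.ne h.ne⟩

lemma top_isSubgraphOf_of_adj {V W : Type} {G : SimpleGraph V} {f : W → V}
    (hf : ∀ u v, u ≠ v → G.Adj (f u) (f v)) : IsSubgraphOf (⊤ : SimpleGraph W) G :=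
  ⟨f, fun u v he => by_contra fun hne => (hf u v hne).ne he, hf⟩

lemma _root_.Ultrafilter.exists_eventually_eq_of_le {α : Type} (U : Ultrafilter α)
    {ℓ : α → ℕ} {d : ℕ} (h : ∀ a, ℓ a ≤ d) : ∃ k ≤ d, ∀ᶠ a in (U : Filter α), ℓ a = k := by
  obtain ⟨k, hk, hU⟩ :=
    (U.map ℓ).eq_pure_of_finite_mem (Set.finite_Iic d) (Ultrafilter.mem_map.2 (univ_mem' h))
  exact ⟨k, hk, Ultrafilter.mem_map.1 (hU ▸ Ultrafilter.mem_pure.2 rfl : {k} ∈ U.map ℓ)⟩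

lemma _root_.Ultrafilter.eventually_gt_of_forall_singleton_notMem {U : Ultrafilter ℕ}
    (hU : ∀ a : ℕ, {a} ∉ U) (k : ℕ) : ∀ᶠ n in (U : Filter ℕ), k < n := by
  rcases U.le_cofinite_or_eq_pure with hle | ⟨a, rfl⟩
  · exact hle (Nat.cofinite_eq_atTop ▸ eventually_gt_atTop k)
  · exact absurd (Ultrafilter.mem_pure.2 rfl) (hU a)

section Ultraproduct

variable {U : Ultrafilter ℕ} {Vs : ℕ → Type} {Gs : ∀ n, SimpleGraph (Vs n)}

def UVertex.mk (U : Ultrafilter ℕ) (g : ∀ n, Vs n) : UVertex U Vs :=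
  Quotient.mk (prodSetoid U Vs) g

lemma UVertex.mk_out (x : UVertex U Vs) : UVertex.mk U (Quotient.out x) = x :=
  Quotient.out_eq x

lemma UVertex.mk_eq_mk {g h : ∀ n, Vs n} :
    UVertex.mk U g = UVertex.mk U h ↔ ∀ᶠ n in (U : Filter ℕ), g n = h n :=
  Quotient.eq

lemma UVertex.eventually_out_mk (g : ∀ n, Vs n) :
    ∀ᶠ n in (U : Filter ℕ), Quotient.out (UVertex.mk U g) n = g n :=
  UVertex.mk_eq_mk.1 (UVertex.mk_out _)

lemma UVertex.eventually_out_ne {x y : UVertex U Vs} (h : x ≠ y) :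
    ∀ᶠ n in (U : Filter ℕ), Quotient.out x n ≠ Quotient.out y n := by
  rw [Ultrafilter.eventually_not, ← UVertex.mk_eq_mk, UVertex.mk_out, UVertex.mk_out]
  exact h

lemma UGraph.adj_mk {g h : ∀ n, Vs n} :
    (UGraph U Gs).Adj (UVertex.mk U g) (UVertex.mk U h) ↔
      ∀ᶠ n in (U : Filter ℕ), (Gs n).Adj (g n) (h n) :=
  Iff.rfl

lemma UGraph.adj_iff_out {x y : UVertex U Vs} :
    (UGraph U Gs).Adj x y ↔
      ∀ᶠ n in (U : Filter ℕ), (Gs n).Adj (Quotient.out x n) (Quotient.out y n) := by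
  conv_lhs => rw [← UVertex.mk_out x, ← UVertex.mk_out y]
  exact UGraph.adj_mk

lemma inLimit_uGraph {C : GraphClass} (hC : ∀ n, C (Vs n) (Gs n)) : InLimit U C (UGraph U Gs) :=
  ⟨Vs, Gs, hC, id, Function.injective_id, fun _ _ h => h⟩

def USet (U : Ultrafilter ℕ) (S : ∀ n, Set (Vs n)) : Set (UVertex U Vs) :=
  {x | ∀ᶠ n in (U : Filter ℕ), Quotient.out x n ∈ S n}

lemma UVertex.mk_mem_uSet {S : ∀ n, Set (Vs n)} {g : ∀ n, Vs n} :
    UVertex.mk U g ∈ USet U S ↔ ∀ᶠ n in (U : Filter ℕ), g n ∈ S n := by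
  refine ⟨fun h => ?_, fun h => ?_⟩ <;>
  · filter_upwards [h, UVertex.eventually_out_mk (U := U) g] with n hn he
    simpa [he] using hn

lemma UGraph.exists_walk {g h : ∀ n, Vs n} {S : ∀ n, Set (Vs n)} {d : ℕ}
    (hp : ∀ᶠ n in (U : Filter ℕ),
      ∃ p : (Gs n).Walk (g n) (h n), p.length ≤ d ∧ ∀ y ∈ p.support, y ∈ S n) :
    ∃ q : (UGraph U Gs).Walk (UVertex.mk U g) (UVertex.mk U h),
      q.length ≤ d ∧ ∀ y ∈ q.support, y ∈ USet U S := by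
  classical
  obtain ⟨s, hs, hsp⟩ : ∃ s ∈ (U : Filter ℕ), ∀ n ∈ s,
      ∃ p : (Gs n).Walk (g n) (h n), p.length ≤ d ∧ ∀ y ∈ p.support, y ∈ S n :=
    ⟨_, hp, fun _ hn => hn⟩
  choose p hlen hsupp using hsp
  obtain ⟨ℓ, hℓd, hℓ⟩ := U.exists_eventually_eq_of_le
    (ℓ := fun n => if hn : n ∈ s then (p n hn).length else 0) fun n => by
      split_ifs with hn
      exacts [hlen n hn, Nat.zero_le d]
  have hgood : ∀ᶠ n in (U : Filter ℕ), ∃ hn : n ∈ s, (p n hn).length = ℓ := by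
    filter_upwards [hℓ, hs] with n hn hns
    exact ⟨hns, by simpa [hns] using hn⟩
  let F : ℕ → UVertex U Vs := fun i =>
    UVertex.mk U fun n => if hn : n ∈ s then (p n hn).getVert i else g n
  have hF0 : F 0 = UVertex.mk U g := by
    simp only [F, Walk.getVert_zero, dite_eq_ite, ite_self]
  have hFℓ : F ℓ = UVertex.mk U h := by
    refine UVertex.mk_eq_mk.2 (hgood.mono fun n ⟨hn, hlen⟩ => ?_)
    simp only [dif_pos hn, ← hlen, Walk.getVert_length]
  obtain ⟨q, hqlen, hqsupp⟩ := exists_walk_of_chain F ℓ fun i hi =>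
    UGraph.adj_mk.2 <| hgood.mono fun n ⟨hn, hlen⟩ => by
      simp only [dif_pos hn]
      exact (p n hn).adj_getVert_succ (by omega)
  refine ⟨q.copy hF0 hFℓ, by rwa [Walk.length_copy, hqlen], fun y hy => ?_⟩
  rw [Walk.support_copy] at hy
  obtain ⟨i, -, rfl⟩ := hqsupp y hy
  refine UVertex.mk_mem_uSet.2 ?_
  filter_upwards [hs] with n hn
  rw [dif_pos hn]
  exact hsupp n hn _ ((p n hn).getVert_mem_support i)

lemma isShallowMinor_uGraph {Ws : ℕ → Type} {Hs : ∀ n, SimpleGraph (Ws n)} {d : ℕ}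
    (h : ∀ n, IsShallowMinor (Gs n) (Hs n) d) :
    IsShallowMinor (UGraph U Gs) (UGraph U Hs) d := by
  choose S hrad hdisj hedge using fun n => isShallowMinor_iff_exists_isBranchSetFamily.1 (h n)
  refine isShallowMinor_iff_exists_isBranchSetFamily.2
    ⟨fun x => USet U fun n => S n (Quotient.out x n), fun x => ?_, fun x x' hne => ?_,
      fun x x' hadj => ?_⟩
  · choose c hc hwalk using fun n => hrad n (Quotient.out x n)
    refine ⟨UVertex.mk U c, UVertex.mk_mem_uSet.2 (univ_mem' hc), fun y hy => ?_⟩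
    rw [← UVertex.mk_out y] at hy ⊢
    exact UGraph.exists_walk ((UVertex.mk_mem_uSet.1 hy).mono fun n hn => hwalk n _ hn)
  · refine Set.disjoint_left.2 fun y hy hy' => ?_
    obtain ⟨n, h1, h2, h3⟩ := (hy.and (hy'.and (UVertex.eventually_out_ne hne))).exists
    exact Set.disjoint_left.1 (hdisj n h3) h1 h2
  · have : ∀ n, Nonempty (Vs n) := fun n => ⟨(hrad n (Quotient.out x n)).choose⟩
    obtain ⟨ab, hab⟩ := Filter.skolem (α := fun n => Vs n × Vs n)
      (P := fun n ab => ab.1 ∈ S n (Quotient.out x n) ∧ ab.2 ∈ S n (Quotient.out x' n) ∧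
        (Gs n).Adj ab.1 ab.2) |>.1 <| (UGraph.adj_iff_out.1 hadj).mono fun n hn => by
        obtain ⟨a, ha, b, hb, hab⟩ := hedge n _ _ hn
        exact ⟨(a, b), ha, hb, hab⟩
    refine ⟨UVertex.mk U fun n => (ab n).1, UVertex.mk_mem_uSet.2 (hab.mono fun _ h => h.1),
      UVertex.mk U fun n => (ab n).2, UVertex.mk_mem_uSet.2 (hab.mono fun _ h => h.2.1),
      UGraph.adj_mk.2 (hab.mono fun _ h => h.2.2)⟩

lemma IsSubgraphOf.exists_factor {ι : Type} [Finite ι] {F : SimpleGraph ι}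
    (h : IsSubgraphOf F (UGraph U Gs)) : ∃ n, IsSubgraphOf F (Gs n) := by
  obtain ⟨f, hf, hadj⟩ := h
  have hne : ∀ᶠ n in (U : Filter ℕ), ∀ i j, i ≠ j →
      Quotient.out (f i) n ≠ Quotient.out (f j) n := by
    simp only [eventually_all]
    exact fun i j hij => UVertex.eventually_out_ne (hf.ne hij)
  have hadj' : ∀ᶠ n in (U : Filter ℕ), ∀ i j, F.Adj i j →
      (Gs n).Adj (Quotient.out (f i) n) (Quotient.out (f j) n) := by
    simp only [eventually_all]
    exact fun i j hij => UGraph.adj_iff_out.1 (hadj hij)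
  obtain ⟨n, hne, hadj'⟩ := (hne.and hadj').exists
  exact ⟨n, fun i => Quotient.out (f i) n,
    fun i j he => by_contra fun hij => hne i j hij he, fun _ _ => hadj' _ _⟩

lemma IsShallowMinor.exists_factor {W : Type} [Finite W] {H : SimpleGraph W} {d : ℕ}
    (h : IsShallowMinor (UGraph U Gs) H d) : ∃ n, IsShallowMinor (Gs n) H d := by
  obtain ⟨s, hs, hmin⟩ := h.exists_finite_induce
  have := hs.to_subtype
  obtain ⟨n, hn⟩ := (induce_isSubgraphOf _ s).exists_factor
  exact ⟨n, hmin.mono hn⟩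

end Ultraproduct

lemma kcontinuum_isSubgraphOf_uGraph_top {U : Ultrafilter ℕ} (hU : ∀ a : ℕ, {a} ∉ U) :
    IsSubgraphOf Kcontinuum (UGraph U fun n => (⊤ : SimpleGraph (Set (Fin n)))) := by
  refine top_isSubgraphOf_of_adj (f := fun A => UVertex.mk U fun n => {k : Fin n | ↑k ∈ A})
    fun A B hAB => UGraph.adj_mk.2 ?_
  obtain ⟨k, hk⟩ : ∃ k, ¬(k ∈ A ↔ k ∈ B) := by
    by_contra! h
    exact hAB (Set.ext h)
  filter_upwards [Ultrafilter.eventually_gt_of_forall_singleton_notMem hU k] with n hkn he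
  exact hk (by simpa using Set.ext_iff.1 he ⟨k, hkn⟩)

theorem dense_equiv_general (U : Ultrafilter ℕ) (hU : ∀ a : ℕ, {a} ∉ U)
    (C : GraphClass) :
    [SomewhereDense C,
     ∃ d : ℕ, ∀ (W : Type) (H : SimpleGraph W), Finite W → InClassMinor C d H,
     ∃ d : ℕ, ∀ (W : Type) (H : SimpleGraph W), Finite W → InLimitMinor U C d H,
     ∃ d : ℕ, InLimitMinor U C d Komega,
     ∃ d : ℕ, InLimitMinor U C d Kcontinuum].TFAE := by
  tfae_have 1 ↔ 2 := Iff.rfl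
  tfae_have 2 → 5 := by
    rintro ⟨d, hdense⟩
    choose Vs Gs hC hmin using fun n => hdense (Set (Fin n)) ⊤ inferInstance
    exact ⟨d, _, _, inLimit_uGraph hC,
      (isShallowMinor_uGraph hmin).of_isSubgraphOf (kcontinuum_isSubgraphOf_uGraph_top hU)⟩
  tfae_have 5 → 4 := fun ⟨d, V, G, hG, hmin⟩ =>
    ⟨d, V, G, hG, hmin.of_isSubgraphOf (isSubgraphOf_top_of_injective Set.singleton_injective)⟩
  tfae_have 4 → 3 := by
    rintro ⟨d, V, G, hG, hmin⟩
    refine ⟨d, fun W H _ => ?_⟩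
    obtain ⟨f, hf⟩ := Countable.exists_injective_nat W
    exact ⟨V, G, hG, hmin.of_isSubgraphOf (isSubgraphOf_top_of_injective hf)⟩
  tfae_have 3 → 2 := by
    rintro ⟨d, h3⟩
    refine ⟨d, fun W H hW => ?_⟩
    obtain ⟨V, G, ⟨Vs, Gs, hC, hG⟩, hmin⟩ := h3 W H hW
    obtain ⟨n, hn⟩ := (hmin.mono hG).exists_factor
    exact ⟨Vs n, Gs n, hC n, hn⟩
  tfae_finish

/-- For a class `C` of finite graphs, the following are equivalent:
(1) `C` is somewhere dense; (2) every finite graph is in `C ▽ d` for some `d`;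
(3) every finite graph is in `C* ▽ d` for some `d`; (4) `K_ω ∈ C* ▽ ω`;
(5) `K_𝔠 ∈ C* ▽ ω`. -/
theorem dense_equiv (U : Ultrafilter ℕ) (hU : ∀ a : ℕ, {a} ∉ U)
    (C : GraphClass) (hfin : FiniteClass C) :
    [SomewhereDense C,
     ∃ d : ℕ, ∀ (W : Type) (H : SimpleGraph W), Finite W → InClassMinor C d H,
     ∃ d : ℕ, ∀ (W : Type) (H : SimpleGraph W), Finite W → InLimitMinor U C d H,
     ∃ d : ℕ, InLimitMinor U C d Komega,
     ∃ d : ℕ, InLimitMinor U C d Kcontinuum].TFAE :=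
  dense_equiv_general U hU C

end NWD
end

section
/- For every class C of finite graphs, the countably infinite clique K_ω belongs to C*▽ω if and only if K_ω belongs to C*∇̃ω; that is, C is limit somewhere dense if and only if C is limit topologically somewhere dense. -/
namespace NWD

open SimpleGraph Filter

/-!
Both sides are witnessed by the same graph of `C*`: a graph contains `K_ω` as a shallow minor
iff it contains it as a shallow topological minor, with the depth changing by a factor two.

A topological model of `K_ω` at depth `d` is turned into a minor model at depth `2d` by giving
the branch vertex `f u` the paths towards its larger neighbours, minus their last vertex.

Conversely, let `B_i` be the branch sets of a minor model of `K_ω` at depth `d`. Among infinitely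
many walks of length `≤ d` from the centre of `B_i` to the edges towards other branch sets there
is an infinite *fan*, walks meeting only in a common hub: either some vertex other than the
centre lies on infinitely many of the walks, and we recurse from it with a shorter length bound,
or every such vertex lies on finitely many, and a greedy choice makes the walks disjoint away
from the centre. Iterating inside the branch sets reached by the previous fan gives hubs `z_k`
that reach every later branch set `B_{i_l}` by private rays. The hubs of even steps are the
branch vertices of `K_ω`, and the pair `u < v` is joined through the branch set of an odd step
reserved for it, by a walk of length `≤ 4d + 2`.
-/

open Function

section ShallowMinorSets

variable {V W : Type} {G : SimpleGraph V} {H : SimpleGraph W}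

def IsCenterWithin (G : SimpleGraph V) (S : Set V) (d : ℕ) (c : V) : Prop :=
  c ∈ S ∧ ∀ y ∈ S, ∃ p : G.Walk c y, p.length ≤ d ∧ ∀ z ∈ p.support, z ∈ S

lemma IsCenterWithin.exists_walk {S : Set V} {d : ℕ} {c : V} (hc : IsCenterWithin G S d c)
    {y y' : V} (hy : y ∈ S) (hy' : y' ∈ S) :
    ∃ p : G.Walk y y', p.length ≤ 2 * d ∧ ∀ z ∈ p.support, z ∈ S := by
  obtain ⟨p, hp, hpS⟩ := hc.2 y hy
  obtain ⟨p', hp', hp'S⟩ := hc.2 y' hy'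
  refine ⟨p.reverse.append p', by simp; omega, fun z hz => ?_⟩
  rw [Walk.mem_support_append_iff, Walk.support_reverse, List.mem_reverse] at hz
  exact hz.elim (hpS z) (hp'S z)

lemma exists_walk_coe_induce_top {S : Set V} {u v : V} (p : G.Walk u v)
    (hp : ∀ z ∈ p.support, z ∈ S) (hu : u ∈ S) (hv : v ∈ S) :
    ∃ q : ((⊤ : G.Subgraph).induce S).coe.Walk ⟨u, hu⟩ ⟨v, hv⟩, q.length = p.length :=
  ⟨(p.induce S hp).mapLe (induce_eq_coe_induce_top S).le, (Walk.length_mapLe _ _).trans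
    ((Walk.length_map _ _).symm.trans (congrArg Walk.length (p.map_induce hp)))⟩

lemma isShallowMinor_iff_exists_sets {d : ℕ} :
    IsShallowMinor G H d ↔ ∃ B : W → Set V, (∀ w, ∃ c, IsCenterWithin G (B w) d c) ∧
      Pairwise (Disjoint on B) ∧ ∀ w w', H.Adj w w' → ∃ x ∈ B w, ∃ y ∈ B w', G.Adj x y := by
  constructor
  · rintro ⟨α, hrad, hdisj, hadj⟩
    refine ⟨fun w => (α w).verts, fun w => ?_, hdisj, hadj⟩
    obtain ⟨c, hc⟩ := hrad w
    refine ⟨c, c.2, fun y hy => ?_⟩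
    obtain ⟨p, hp⟩ := hc ⟨y, hy⟩
    refine ⟨p.map (α w).hom, (Walk.length_map _ _).trans_le hp, fun z hz => ?_⟩
    obtain ⟨z, -, rfl⟩ := List.mem_map.1 ((Walk.support_map _ _) ▸ hz)
    exact z.2
  · rintro ⟨B, hrad, hdisj, hadj⟩
    refine ⟨fun w => (⊤ : G.Subgraph).induce (B w), fun w => ?_, hdisj, hadj⟩
    obtain ⟨c, hc, hcB⟩ := hrad w
    refine ⟨⟨c, hc⟩, fun ⟨y, hy⟩ => ?_⟩
    obtain ⟨p, hp, hpB⟩ := hcB y hy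
    obtain ⟨q, hq⟩ := exists_walk_coe_induce_top p hpB hc hy
    exact ⟨q, hq ▸ hp⟩

end ShallowMinorSets

section TopToMinor

variable {V W : Type} {G : SimpleGraph V} {H : SimpleGraph W} {d : ℕ} {f : W → V}
  {P : ∀ ⦃u v : W⦄, H.Adj u v → G.Walk (f u) (f v)}

lemma IsTopMinorModel.eq_or_eq_of_apply_mem_support (hP : IsTopMinorModel G H d f P)
    {u a b : W} (hu : ∃ w, H.Adj u w) (h : H.Adj a b) (hfu : f u ∈ (P h).support) :
    u = a ∨ u = b := by
  obtain ⟨hf, -, -, -, hdisj⟩ := hP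
  obtain ⟨w, huw⟩ := hu
  by_cases hs : s(u, w) = s(a, b)
  · exact Sym2.mem_iff.1 (hs ▸ Sym2.mem_mk_left u w)
  · obtain ⟨-, ha | hb⟩ := hdisj huw h hs (f u) (P huw).start_mem_support hfu
    exacts [Or.inl (hf ha), Or.inr (hf hb)]

variable [LinearOrder W]

def topBranchSet (P : ∀ ⦃u v : W⦄, H.Adj u v → G.Walk (f u) (f v)) (u : W) : Set V :=
  insert (f u) {y | ∃ v, u < v ∧ ∃ h : H.Adj u v, y ∈ (P h).support ∧ y ≠ f v}

lemma isCenterWithin_topBranchSet (hP : IsTopMinorModel G H d f P) (u : W) :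
    IsCenterWithin G (topBranchSet P u) (2 * d) (f u) := by
  classical
  obtain ⟨-, hpath, hlen, -⟩ := hP
  refine ⟨Set.mem_insert _ _, fun y hy => ?_⟩
  rcases hy with rfl | ⟨v, huv, h, hy, hyv⟩
  · exact ⟨Walk.nil, Nat.zero_le _, fun z hz => by simp_all [topBranchSet]⟩
  refine ⟨(P h).takeUntil y hy, ?_, fun z hz => Set.mem_insert_of_mem _
    ⟨v, huv, h, (P h).support_takeUntil_subset_support hy hz, ?_⟩⟩
  · have := Walk.length_takeUntil_lt_length hy hyv
    have := hlen h
    omega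
  · rintro rfl
    exact Walk.endpoint_notMem_support_takeUntil (hpath h) hy hyv.symm hz

lemma eq_of_apply_mem_topBranchSet (hP : IsTopMinorModel G H d f P) {u u' : W}
    (hu : ∃ w, H.Adj u w) (h : f u ∈ topBranchSet P u') : u = u' := by
  rcases h with h | ⟨v, -, h, hu', huv⟩
  · exact hP.1 h
  · exact (hP.eq_or_eq_of_apply_mem_support hu h hu').resolve_right
      (fun e => huv (congrArg f e))

lemma pairwise_disjoint_topBranchSet (hP : IsTopMinorModel G H d f P)
    (hH : ∀ w, ∃ w', H.Adj w w') : Pairwise (Disjoint on topBranchSet P) := by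
  intro u u' hne
  refine Set.disjoint_left.2 fun y hy hy' => ?_
  rcases hy with rfl | ⟨v, huv, h, hy, hyv⟩
  · exact hne (eq_of_apply_mem_topBranchSet hP (hH u) hy')
  rcases hy' with rfl | ⟨v', huv', h', hy', hyv'⟩
  · exact hne (eq_of_apply_mem_topBranchSet hP (hH u') (Set.mem_insert_of_mem _
      ⟨v, huv, h, hy, hyv⟩)).symm
  by_cases hs : s(u, v) = s(u', v')
  · rcases Sym2.eq_iff.1 hs with ⟨rfl, -⟩ | ⟨rfl, rfl⟩
    exacts [hne rfl, (huv.trans huv').false]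
  · obtain ⟨rfl | rfl, -⟩ := hP.2.2.2.2 h h' hs y hy hy'
    · exact hne (eq_of_apply_mem_topBranchSet hP (hH u) (Set.mem_insert_of_mem _
        ⟨v', huv', h', hy', hyv'⟩))
    · exact hyv rfl

lemma exists_adj_topBranchSet (hP : IsTopMinorModel G H d f P) {u v : W} (h : H.Adj u v) :
    ∃ x ∈ topBranchSet P u, ∃ y ∈ topBranchSet P v, G.Adj x y := by
  have key : ∀ {u v} (h : H.Adj u v), u < v → ∃ x ∈ topBranchSet P u, G.Adj x (f v) := by
    intro u v h huv
    have hnil : ¬(P h).Nil := Walk.not_nil_of_ne fun e => huv.ne (hP.1 e)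
    have hadj := Walk.adj_penultimate hnil
    exact ⟨_, Set.mem_insert_of_mem _ ⟨v, huv, h, (P h).getVert_mem_support _, hadj.ne⟩, hadj⟩
  rcases h.ne.lt_or_gt with huv | hvu
  · obtain ⟨x, hx, hadj⟩ := key h huv
    exact ⟨x, hx, f v, Set.mem_insert _ _, hadj⟩
  · obtain ⟨y, hy, hadj⟩ := key h.symm hvu
    exact ⟨f u, Set.mem_insert _ _, y, hy, hadj.symm⟩

end TopToMinor

lemma IsTopShallowMinor.isShallowMinor {V W : Type} {G : SimpleGraph V} {H : SimpleGraph W}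
    {d : ℕ} (hH : ∀ w, ∃ w', H.Adj w w') (h : IsTopShallowMinor G H d) :
    IsShallowMinor G H (2 * d) := by
  classical
  let _ : LinearOrder W := IsWellOrder.linearOrder WellOrderingRel
  obtain ⟨f, P, hP⟩ := h
  exact isShallowMinor_iff_exists_sets.2 ⟨topBranchSet P,
    fun u => ⟨f u, isCenterWithin_topBranchSet hP u⟩,
    pairwise_disjoint_topBranchSet hP hH, fun _ _ => exists_adj_topBranchSet hP⟩

section TopOfWalks

variable {V W : Type} {G : SimpleGraph V} [LinearOrder W] {d : ℕ} {f : W → V}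

lemma isTopShallowMinor_top_of_walks (hf : Injective f)
    (P : ∀ u v : W, u < v → G.Walk (f u) (f v)) (hlen : ∀ u v h, (P u v h).length ≤ 2 * d + 1)
    (hmeet : ∀ u v h u' v' h', (u, v) ≠ (u', v') → ∀ y ∈ (P u v h).support,
      y ∈ (P u' v' h').support → (y = f u ∨ y = f v) ∧ (y = f u' ∨ y = f v')) :
    IsTopShallowMinor G (⊤ : SimpleGraph W) d := by
  classical
  have hlt {u v : W} (h : (⊤ : SimpleGraph W).Adj u v) (huv : ¬u < v) : v < u :=
    h.ne.lt_or_gt.resolve_left huv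
  let Q : ∀ ⦃u v : W⦄, (⊤ : SimpleGraph W).Adj u v → G.Walk (f u) (f v) := fun u v h =>
    if huv : u < v then (P u v huv).bypass else (P v u (hlt h huv)).bypass.reverse
  have hQ : ∀ ⦃u v⦄ (h : (⊤ : SimpleGraph W).Adj u v), ∃ a b, ∃ hab : a < b,
      s(u, v) = s(a, b) ∧ (Q h).IsPath ∧ (Q h).length ≤ 2 * d + 1 ∧
      (Q h).support ⊆ (P a b hab).support := by
    intro u v h
    by_cases huv : u < v
    · refine ⟨u, v, huv, rfl, ?_⟩
      simp only [Q, dif_pos huv]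
      exact ⟨Walk.bypass_isPath _, (Walk.length_bypass_le_length _).trans (hlen _ _ _),
        Walk.support_bypass_subset_support _⟩
    · refine ⟨v, u, hlt h huv, Sym2.eq_swap, ?_⟩
      simp only [Q, dif_neg huv, Walk.length_reverse, Walk.support_reverse]
      exact ⟨(Walk.bypass_isPath _).reverse,
        (Walk.length_bypass_le_length _).trans (hlen _ _ _),
        fun y hy => Walk.support_bypass_subset_support _ (List.mem_reverse.1 hy)⟩
  refine ⟨f, Q, hf, fun u v h => ?_, fun u v h => ?_, fun u v h => ?_, ?_⟩
  · obtain ⟨-, -, -, -, hpath, -⟩ := hQ h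
    exact hpath
  · obtain ⟨-, -, -, -, -, hlen, -⟩ := hQ h
    exact hlen
  · by_cases huv : u < v
    · simp only [Q, dif_pos huv, dif_neg (lt_asymm huv)]
    · simp only [Q, dif_neg huv, dif_pos (hlt h huv), Walk.reverse_reverse]
  · intro u v u' v' h h' hne y hy hy'
    obtain ⟨a, b, hab, hs, -, -, hsub⟩ := hQ h
    obtain ⟨a', b', hab', hs', -, -, hsub'⟩ := hQ h'
    have hpair : (a, b) ≠ (a', b') := by
      rintro ⟨⟩
      exact hne (hs.trans hs'.symm)
    obtain ⟨h1, h2⟩ := hmeet a b hab a' b' hab' hpair y (hsub hy) (hsub' hy')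
    constructor
    · rcases Sym2.eq_iff.1 hs with ⟨rfl, rfl⟩ | ⟨rfl, rfl⟩ <;> tauto
    · rcases Sym2.eq_iff.1 hs' with ⟨rfl, rfl⟩ | ⟨rfl, rfl⟩ <;> tauto

end TopOfWalks

lemma exists_infinite_forall_lt_not_rel {T : Set ℕ} (hT : T.Infinite) {R : ℕ → ℕ → Prop}
    (hR : ∀ m, {n | R m n}.Finite) :
    ∃ J ⊆ T, J.Infinite ∧ ∀ m ∈ J, ∀ n ∈ J, m < n → ¬R m n := by
  choose g hgT hg using hT.exists_gt
  choose b hb using fun m => (hR m).bddAbove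
  -- each new element lies in `T` beyond the previous one and all its `R`-successors
  let e : ℕ → ℕ := fun n => (fun k => g (max k (b k)))^[n] (g 0)
  have he : ∀ n, e (n + 1) = g (max (e n) (b (e n))) := fun n =>
    Function.iterate_succ_apply' _ _ _
  have hmono : StrictMono e := strictMono_nat_of_lt_succ fun n => by
    have := hg (max (e n) (b (e n)))
    rw [he]
    omega
  refine ⟨Set.range e, ?_, Set.infinite_range_of_injective hmono.injective, ?_⟩
  · rintro _ ⟨n | n, rfl⟩
    exacts [hgT 0, he n ▸ hgT _]
  · rintro _ ⟨m, rfl⟩ _ ⟨n, rfl⟩ hmn hRmn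
    have h1 := hb (e m) hRmn
    have h2 := hmono.monotone (hmono.lt_iff_lt.1 hmn : m + 1 ≤ n)
    have h3 := hg (max (e m) (b (e m)))
    rw [he] at h2
    omega

section Fans

variable {V : Type} {G : SimpleGraph V}

structure IsFan (G : SimpleGraph V) (d : ℕ) (S : Set V) (z : V) (x : ℕ → V) (J : Set ℕ)
    (σ : ℕ → Set V) : Prop where
  subset : ∀ t ∈ J, σ t ⊆ S
  exists_walk : ∀ t ∈ J, ∃ p : G.Walk z (x t), p.length ≤ d ∧ ∀ y ∈ p.support, y ∈ σ t
  inter_subset : ∀ t ∈ J, ∀ t' ∈ J, t ≠ t' → σ t ∩ σ t' ⊆ {z}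

lemma IsFan.mono {d d' : ℕ} {S : Set V} {z : V} {x : ℕ → V} {J : Set ℕ} {σ : ℕ → Set V}
    (h : IsFan G d S z x J σ) (hd : d ≤ d') : IsFan G d' S z x J σ where
  subset := h.subset
  exists_walk t ht := by
    obtain ⟨p, hp, hpσ⟩ := h.exists_walk t ht
    exact ⟨p, hp.trans hd, hpσ⟩
  inter_subset := h.inter_subset

lemma IsFan.hub_mem {d : ℕ} {S : Set V} {z : V} {x : ℕ → V} {J : Set ℕ} {σ : ℕ → Set V}
    (h : IsFan G d S z x J σ) (hJ : J.Nonempty) : z ∈ S := by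
  obtain ⟨t, ht⟩ := hJ
  obtain ⟨p, -, hpσ⟩ := h.exists_walk t ht
  exact h.subset t ht (hpσ z p.start_mem_support)

lemma exists_fan_of_finite {d : ℕ} {S : Set V} {c : V} {x : ℕ → V} {T : Set ℕ}
    (hT : T.Infinite) {σ : ℕ → Set V} (hσ : ∀ t, (σ t).Finite) (hS : ∀ t ∈ T, σ t ⊆ S)
    (hwalk : ∀ t ∈ T, ∃ p : G.Walk c (x t), p.length ≤ d ∧ ∀ y ∈ p.support, y ∈ σ t)
    (hfin : ∀ y ≠ c, {t | y ∈ σ t}.Finite) :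
    ∃ J ⊆ T, J.Infinite ∧ IsFan G d S c x J σ := by
  have hR : ∀ m, {n | ∃ y ≠ c, y ∈ σ m ∧ y ∈ σ n}.Finite := fun m =>
    ((hσ m).sdiff.biUnion fun y hy => hfin y hy.2).subset
      fun n ⟨y, hyc, hym, hyn⟩ => Set.mem_biUnion ⟨hym, hyc⟩ hyn
  obtain ⟨J, hJT, hJ, hJR⟩ := exists_infinite_forall_lt_not_rel hT hR
  refine ⟨J, hJT, hJ, fun t ht => hS t (hJT ht), fun t ht => hwalk t (hJT ht), ?_⟩
  intro t ht t' ht' hne y ⟨hy, hy'⟩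
  by_contra hyc
  rcases hne.lt_or_gt with hlt | hlt
  exacts [hJR t ht t' ht' hlt ⟨y, hyc, hy, hy'⟩, hJR t' ht' t ht hlt ⟨y, hyc, hy', hy⟩]

variable {S : Set V} {x : ℕ → V}

lemma exists_fan_or_exists_shorter {d : ℕ} {c : V} {T : Set ℕ} (hT : T.Infinite)
    (hp : ∀ t ∈ T, ∃ p : G.Walk c (x t), p.length ≤ d ∧ ∀ y ∈ p.support, y ∈ S) :
    (∃ σ, ∃ J ⊆ T, J.Infinite ∧ IsFan G d S c x J σ) ∨
      ∃ v, ∃ T' ⊆ T, T'.Infinite ∧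
        ∀ t ∈ T', ∃ q : G.Walk v (x t), q.length < d ∧ ∀ y ∈ q.support, y ∈ S := by
  classical
  choose p hpd hpS using hp
  let σ : ℕ → Set V := fun t => {y | ∃ ht : t ∈ T, y ∈ (p t ht).support}
  by_cases hfin : ∀ y ≠ c, {t | y ∈ σ t}.Finite
  · refine Or.inl ⟨σ, exists_fan_of_finite hT (fun t => ?_) (fun t _ y ⟨ht, hy⟩ => hpS t ht y hy)
      (fun t ht => ⟨p t ht, hpd t ht, fun y hy => ⟨ht, hy⟩⟩) hfin⟩
    by_cases ht : t ∈ T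
    · exact (p t ht).support.finite_toSet.subset fun y ⟨_, hy⟩ => hy
    · exact Set.finite_empty.subset fun y ⟨ht', _⟩ => absurd ht' ht
  push Not at hfin
  obtain ⟨v, hvc, hv⟩ := hfin
  refine Or.inr ⟨v, {t | v ∈ σ t}, fun t ⟨ht, _⟩ => ht, hv, fun t ⟨ht, hvt⟩ => ?_⟩
  exact ⟨(p t ht).dropUntil v hvt, (Walk.length_dropUntil_lt_length hvt hvc).trans_le (hpd t ht),
    fun y hy => hpS t ht y ((p t ht).support_dropUntil_subset_support hvt hy)⟩

lemma exists_fan (d : ℕ) {c : V} {T : Set ℕ} (hT : T.Infinite)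
    (hp : ∀ t ∈ T, ∃ p : G.Walk c (x t), p.length ≤ d ∧ ∀ y ∈ p.support, y ∈ S) :
    ∃ z σ, ∃ J ⊆ T, J.Infinite ∧ IsFan G d S z x J σ := by
  induction d generalizing c T with
  | zero =>
    rcases exists_fan_or_exists_shorter hT hp with ⟨σ, hfan⟩ | ⟨v, T', -, hT', hq⟩
    · exact ⟨c, σ, hfan⟩
    · obtain ⟨t, ht⟩ := hT'.nonempty
      obtain ⟨q, hq, -⟩ := hq t ht
      exact absurd hq (Nat.not_lt_zero _)
  | succ d ih =>
    rcases exists_fan_or_exists_shorter hT hp with ⟨σ, hfan⟩ | ⟨v, T', hT'T, hT', hq⟩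
    · exact ⟨c, σ, hfan⟩
    · obtain ⟨z, σ, J, hJT', hJ, hfan⟩ :=
        ih hT' fun t ht => (hq t ht).imp fun q hq => ⟨Nat.lt_succ_iff.1 hq.1, hq.2⟩
      exact ⟨z, σ, J, hJT'.trans hT'T, hJ, hfan.mono d.le_succ⟩

end Fans

lemma exists_nested_selection {Q : ℕ → Set ℕ → Prop}
    (h : ∀ A : Set ℕ, A.Infinite → ∃ i ∈ A, ∃ J ⊆ A, i ∉ J ∧ J.Infinite ∧ Q i J) :
    ∃ (i : ℕ → ℕ) (J : ℕ → Set ℕ), Injective i ∧ (∀ k l, k < l → i l ∈ J k) ∧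
      ∀ k, Q (i k) (J k) := by
  choose I hI N hNA hIN hN hQ using h
  let pool : ℕ → {A : Set ℕ // A.Infinite} := fun k =>
    Nat.rec ⟨Set.univ, Set.infinite_univ⟩ (fun _ A => ⟨N A.1 A.2, hN A.1 A.2⟩) k
  let i : ℕ → ℕ := fun k => I (pool k).1 (pool k).2
  let J : ℕ → Set ℕ := fun k => N (pool k).1 (pool k).2
  have hsub : ∀ k l, k < l → (pool l).1 ⊆ J k := by
    intro k l hkl
    induction hkl with
    | refl => exact subset_rfl
    | step _ ih => exact (hNA _ _).trans ih
  have hmem : ∀ k l, k < l → i l ∈ J k := fun k l hkl => hsub k l hkl (hI _ _)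
  refine ⟨i, J, fun k l hkl => ?_, hmem, fun k => hQ _ _⟩
  by_contra hne
  rcases Ne.lt_or_gt hne with hlt | hlt
  · exact hIN _ _ (hkl ▸ hmem k l hlt)
  · exact hIN _ _ (hkl.symm ▸ hmem l k hlt)

section Hubs

variable {V : Type} {G : SimpleGraph V} {d : ℕ}

lemma IsFan.exists_walk_via {S S' M : Set V} {z z' c : V} {x x' : ℕ → V} {J J' : Set ℕ}
    {σ σ' : ℕ → Set V} (h : IsFan G d S z x J σ) (h' : IsFan G d S' z' x' J' σ')
    (hM : IsCenterWithin G M d c) {t : ℕ} (ht : t ∈ J) (ht' : t ∈ J') {b b' : V}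
    (hb : b ∈ M) (hb' : b' ∈ M) (hxb : G.Adj (x t) b) (hxb' : G.Adj (x' t) b') :
    ∃ p : G.Walk z z', p.length ≤ 4 * d + 2 ∧ ∀ y ∈ p.support, y ∈ σ t ∨ y ∈ M ∨ y ∈ σ' t := by
  obtain ⟨r, hr, hrσ⟩ := h.exists_walk t ht
  obtain ⟨r', hr', hr'σ⟩ := h'.exists_walk t ht'
  obtain ⟨q, hq, hqM⟩ := hM.exists_walk hb hb'
  refine ⟨r.append (.cons hxb (q.append (.cons hxb'.symm r'.reverse))), ?_, fun y hy => ?_⟩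
  · simp only [Walk.length_append, Walk.length_cons, Walk.length_reverse]
    omega
  · simp only [Walk.mem_support_append_iff, Walk.support_cons, List.mem_cons,
      Walk.support_reverse, List.mem_reverse] at hy
    rcases hy with hy | rfl | hy | rfl | hy
    exacts [.inl (hrσ y hy), .inl (hrσ _ r.end_mem_support), .inr (.inl (hqM y hy)),
      .inr (.inl hb'), .inr (.inr (hr'σ y hy))]

lemma exists_hubs {B : ℕ → Set V} {c : ℕ → V}
    (hc : ∀ k, IsCenterWithin G (B k) d (c k)) {x : ℕ → ℕ → V}
    (hx : ∀ i j, i ≠ j → x i j ∈ B i) :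
    ∃ (i : ℕ → ℕ) (J : ℕ → Set ℕ) (z : ℕ → V) (σ : ℕ → ℕ → Set V), Injective i ∧
      (∀ k l, k < l → i l ∈ J k) ∧ ∀ k, IsFan G d (B (i k)) (z k) (x (i k)) (J k) (σ k) := by
  obtain ⟨i, J, hi, hiJ, hfan⟩ := exists_nested_selection
    (Q := fun i J => ∃ z σ, IsFan G d (B i) z (x i) J σ) fun A hA => by
    obtain ⟨i, hi⟩ := hA.nonempty
    obtain ⟨z, σ, J, hJ, hJinf, hfan⟩ := exists_fan d (hA.sdiff (Set.finite_singleton i))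
      fun t ht => (hc i).2 _ (hx i t (Ne.symm ht.2))
    exact ⟨i, hi, J, hJ.trans Set.sdiff_subset, fun h => (hJ h).2 rfl, hJinf, z, σ, hfan⟩
  choose z σ hfan using hfan
  exact ⟨i, J, z, σ, hi, hiJ, hfan⟩

end Hubs

lemma isTopShallowMinor_top_of_hubs {V : Type} {G : SimpleGraph V} {d : ℕ} {B : ℕ → Set V}
    {c : ℕ → V} {x y : ℕ → ℕ → V} {i : ℕ → ℕ} {J : ℕ → Set ℕ} {z : ℕ → V}
    {σ : ℕ → ℕ → Set V} (hc : ∀ k, IsCenterWithin G (B k) d (c k))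
    (hB : ∀ {k l v}, v ∈ B k → v ∈ B l → k = l)
    (hxy : ∀ k l, k ≠ l → y k l ∈ B l ∧ G.Adj (x k l) (y k l)) (hi : Injective i)
    (hiJ : ∀ k l, k < l → i l ∈ J k)
    (hfan : ∀ k, IsFan G d (B (i k)) (z k) (x (i k)) (J k) (σ k)) :
    IsTopShallowMinor G (⊤ : SimpleGraph ℕ) (2 * d + 1) := by
  -- vertex `u` of `K_ω` sits at the hub of step `2u`; the pair `u < v` is routed through the
  -- branch set of the odd step `2⟪u, v⟫ + 1`, which both hubs reach by a ray
  let m : ℕ → ℕ → ℕ := fun u v => i (2 * Nat.pair u v + 1)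
  have hm_mem : ∀ u v w, w = u ∨ w = v → m u v ∈ J (2 * w) := fun u v w hw =>
    hiJ _ _ (by have := Nat.left_le_pair u v; have := Nat.right_le_pair u v; omega)
  have hm_ne : ∀ u v w, i (2 * w) ≠ m u v := fun u v w h => by have := hi h; omega
  have hσB : ∀ {k t v}, t ∈ J k → v ∈ σ k t → v ∈ B (i k) := fun ht hv =>
    (hfan _).subset _ ht hv
  have hwalk : ∀ u v, u < v → ∃ p : G.Walk (z (2 * u)) (z (2 * v)),
      p.length ≤ 2 * (2 * d + 1) + 1 ∧
      ∀ a ∈ p.support, a ∈ B (m u v) ∨ ∃ w, (w = u ∨ w = v) ∧ a ∈ σ (2 * w) (m u v) := by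
    intro u v _
    obtain ⟨hyu, hadju⟩ := hxy _ _ (hm_ne u v u)
    obtain ⟨hyv, hadjv⟩ := hxy _ _ (hm_ne u v v)
    obtain ⟨p, hp, hpS⟩ := (hfan (2 * u)).exists_walk_via (hfan (2 * v)) (hc (m u v))
      (hm_mem u v u (.inl rfl)) (hm_mem u v v (.inr rfl)) hyu hyv hadju hadjv
    refine ⟨p, by omega, fun a ha => ?_⟩
    rcases hpS a ha with h | h | h
    exacts [.inr ⟨u, .inl rfl, h⟩, .inl h, .inr ⟨v, .inr rfl, h⟩]
  choose P hPlen hPsupp using hwalk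
  refine isTopShallowMinor_top_of_walks (f := fun u => z (2 * u)) (fun u u' h => ?_) P hPlen ?_
  · have hzB : ∀ u, z (2 * u) ∈ B (i (2 * u)) := fun u =>
      (hfan _).hub_mem ⟨_, hiJ _ (2 * u + 1) (Nat.lt_succ_self _)⟩
    have h : z (2 * u) = z (2 * u') := h
    have := hi (hB (hzB u) (h ▸ hzB u'))
    omega
  intro u v huv u' v' huv' hne a ha ha'
  have hm : m u v ≠ m u' v' := fun h => by
    have := hi h
    exact hne (Prod.ext_iff.2 (Nat.pair_eq_pair.1 (by omega : Nat.pair u v = Nat.pair u' v')))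
  rcases hPsupp u v huv a ha with haB | ⟨w, hw, haσ⟩ <;>
    rcases hPsupp u' v' huv' a ha' with haB' | ⟨w', hw', haσ'⟩
  · exact absurd (hB haB haB') hm
  · exact absurd (hB (hσB (hm_mem u' v' w' hw') haσ') haB) (hm_ne u v w')
  · exact absurd (hB (hσB (hm_mem u v w hw) haσ) haB') (hm_ne u' v' w)
  · obtain rfl : w = w' := by have := hi (hB (hσB (hm_mem u v w hw) haσ)
      (hσB (hm_mem u' v' w' hw') haσ')); omega
    obtain rfl : a = z (2 * w) := (hfan (2 * w)).inter_subset _ (hm_mem u v w hw) _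
      (hm_mem u' v' w hw') hm ⟨haσ, haσ'⟩
    constructor
    · rcases hw with rfl | rfl <;> simp
    · rcases hw' with rfl | rfl <;> simp

lemma IsShallowMinor.isTopShallowMinor_top {V : Type} {G : SimpleGraph V} {d : ℕ}
    (h : IsShallowMinor G (⊤ : SimpleGraph ℕ) d) :
    IsTopShallowMinor G (⊤ : SimpleGraph ℕ) (2 * d + 1) := by
  obtain ⟨B, hc, hdisj, hadj⟩ := isShallowMinor_iff_exists_sets.1 h
  choose c hc using hc
  have hedge : ∀ k l, ∃ a b : V, k ≠ l → a ∈ B k ∧ b ∈ B l ∧ G.Adj a b := fun k l => by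
    by_cases hkl : k = l
    · exact ⟨c k, c l, absurd hkl⟩
    · obtain ⟨a, ha, b, hb, hab⟩ := hadj k l ((top_adj _ _).2 hkl)
      exact ⟨a, b, fun _ => ⟨ha, hb, hab⟩⟩
  choose x y hxy using hedge
  obtain ⟨i, J, z, σ, hi, hiJ, hfan⟩ := exists_hubs hc fun k l hkl => (hxy k l hkl).1
  exact isTopShallowMinor_top_of_hubs hc
    (fun hk hl => by_contra fun hne => Set.disjoint_left.1 (hdisj hne) hk hl)
    (fun k l hkl => (hxy k l hkl).2) hi hiJ hfan

theorem limit_dense_top_equiv_general (U : Ultrafilter ℕ) (C : GraphClass) :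
    (∃ d : ℕ, InLimitMinor U C d Komega) ↔ (∃ d : ℕ, InLimitTopMinor U C d Komega) := by
  constructor
  · rintro ⟨d, V, G, hlim, hmin⟩
    exact ⟨2 * d + 1, V, G, hlim, hmin.isTopShallowMinor_top⟩
  · rintro ⟨d, V, G, hlim, htop⟩
    exact ⟨2 * d, V, G, hlim, htop.isShallowMinor fun u => ⟨u + 1, by simp [Komega]⟩⟩

/-- `K_ω ∈ C* ▽ ω` iff `K_ω ∈ C* ∇̃ ω`: `C` is limit somewhere dense iff
`C` is limit topologically somewhere dense. -/
theorem limit_dense_top_equiv (U : Ultrafilter ℕ) (hU : ∀ a : ℕ, {a} ∉ U)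
    (C : GraphClass) (hfin : FiniteClass C) :
    (∃ d : ℕ, InLimitMinor U C d Komega) ↔ (∃ d : ℕ, InLimitTopMinor U C d Komega) :=
  limit_dense_top_equiv_general U C

end NWD
end
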